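/- arXiv:1811.03338 — 2 statements merged into one kernel-verified Lean document; each statement's English description precedes it below -/
import Mathlib

section
/- For the mod 2 Steenrod algebra with generators Q^i (i ≥ 1) subject to the Adem relations Q^i Q^j = Σ_{k=0}^{⌊i/2⌋} C(j−k−1, i−2k) Q^{i+j−k} Q^k for 0 < i < 2j: if Q^S is a non-admissible monomial of length k and Q^S = Σ a_J Q^J is its expression in admissible monomials after applying Adem relations, then a_J ≡ 1 mod 2 implies J < S in the excess order on sequences (padding with zeros to compare sequences of different lengths as having smaller length, i.e. shorter sequences are smaller). -/
noncomputable section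

abbrev F : Type := FreeAlgebra (ZMod 2) ℕ

def Q (i : ℕ) : F := FreeAlgebra.ι (ZMod 2) i

def QI (I : List ℕ) : F := (I.map Q).prod

/-- Binomial coefficient mod 2 with possibly negative arguments (zero out of range). -/
def ch (m n : ℤ) : ZMod 2 :=
  if 0 ≤ m ∧ 0 ≤ n then ((m.toNat).choose n.toNat : ZMod 2) else 0

/-- The relations presenting the mod 2 Steenrod algebra on the generators `Q^i` : the
identification `Q^0 = 1` and the (cohomology) Adem relations
`Q^i Q^j = Σ_{k=0}^{⌊i/2⌋} C(j−k−1, i−2k) Q^{i+j−k} Q^k` for `0 < i < 2j`. -/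
inductive steenrodRel : F → F → Prop
  | unit : steenrodRel (Q 0) 1
  | adem (i j : ℕ) (h1 : 0 < i) (h2 : i < 2 * j) :
      steenrodRel (Q i * Q j)
        (∑ k ∈ Finset.range (i / 2 + 1),
          ch ((j : ℤ) - k - 1) ((i : ℤ) - 2 * k) • (Q (i + j - k) * Q k))

/-- The mod 2 Steenrod algebra `𝒜₂`. -/
abbrev A2 : Type := RingQuot steenrodRel

def mkA : F →ₐ[ZMod 2] A2 := RingQuot.mkAlgHom (ZMod 2) steenrodRel

/-- A monomial `Q^{s_k}⋯Q^{s_1}` (list written left to right) is admissible if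
`s_{t+1} ≥ 2 s_t` for all `t`. -/
def StAdmissible (L : List ℕ) : Prop := List.Chain' (fun x y => 2 * y ≤ x) L

/-- Truncated excesses of a sequence written as a list `[i_k,...,i_1]`. -/
def truncExcess (I : List ℕ) (t : ℕ) : ℤ :=
  (I.reverse.getD t 0 : ℤ) - ∑ s ∈ Finset.range t, (I.reverse.getD s 0 : ℤ)

/-- The excess order on sequences: shorter sequences are smaller; equal-length sequences
are compared by truncated excess at the smallest index where they differ. -/
def seqLT (I J : List ℕ) : Prop :=
  I.length < J.length ∨
    (I.length = J.length ∧
      ∃ t < I.length, (∀ s < t, truncExcess I s = truncExcess J s) ∧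
        truncExcess I t < truncExcess J t)

/-! Applying the Adem relation at an adjacent pair `(a, b)` with `a < 2b` replaces it by pairs
`(a + b - k, k)` with `k < b`, which lowers the truncated excess at the position of `b` and keeps
those of the entries to its right; deleting a `Q^0` shortens the sequence. Both moves are strictly decreasing in
the excess order and in the weight `Σ i·sᵢ + length`, so rewriting terminates, and `Q^S` lies in
the span of the admissible monomials `Q^J` with `J ≤ S`. Over `𝔽₂` an element of a span is a sum
of distinct generators, and for non-admissible `S` the term `J = S` cannot occur. -/

lemma exists_finset_sum_eq_of_mem_span_image_zmod_two {ι M : Type*} [AddCommMonoid M]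
    [Module (ZMod 2) M] {v : ι → M} {s : Set ι} {x : M}
    (hx : x ∈ Submodule.span (ZMod 2) (v '' s)) :
    ∃ c : Finset ι, ↑c ⊆ s ∧ x = ∑ i ∈ c, v i := by
  obtain ⟨l, hls, rfl⟩ := (Finsupp.mem_span_image_iff_linearCombination (ZMod 2)).mp hx
  have eq_one_of_ne_zero : ∀ z : ZMod 2, z ≠ 0 → z = 1 := by decide
  refine ⟨l.support, hls, ?_⟩
  rw [Finsupp.linearCombination_apply, Finsupp.sum]
  refine Finset.sum_congr rfl fun i hi => ?_
  rw [eq_one_of_ne_zero _ (Finsupp.mem_support_iff.mp hi), one_smul]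

lemma exists_eq_append_cons_cons_of_not_stAdmissible {S : List ℕ} (h : ¬ StAdmissible S) :
    ∃ P a b R, S = P ++ a :: b :: R ∧ a < 2 * b := by
  have h' : ¬ List.IsChain (fun x y => 2 * y ≤ x) S := h
  simp only [List.isChain_iff_forall_rel_of_append_cons_cons, not_forall, not_le] at h'
  obtain ⟨a, b, P, R, hS, hab⟩ := h'
  exact ⟨P, a, b, R, hS, hab⟩

lemma mkA_eq_of_steenrodRel {x y : F} (h : steenrodRel x y) : mkA x = mkA y :=
  RingQuot.mkAlgHom_rel (ZMod 2) h

lemma mkA_Q_zero : mkA (Q 0) = 1 := by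
  simpa using mkA_eq_of_steenrodRel steenrodRel.unit

lemma mkA_QI_append_zero_cons (P R : List ℕ) : mkA (QI (P ++ 0 :: R)) = mkA (QI (P ++ R)) := by
  simp [QI, mkA_Q_zero]

lemma mkA_Q_mul_Q {i j : ℕ} (hi : 0 < i) (hij : i < 2 * j) :
    mkA (Q i * Q j) = ∑ k ∈ Finset.range (i / 2 + 1),
      ch ((j : ℤ) - k - 1) ((i : ℤ) - 2 * k) • mkA (Q (i + j - k) * Q k) := by
  rw [mkA_eq_of_steenrodRel (steenrodRel.adem i j hi hij), map_sum]
  simp only [map_smul]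

lemma mkA_QI_append_cons_cons (P R : List ℕ) {a b : ℕ} (ha : 0 < a) (hab : a < 2 * b) :
    mkA (QI (P ++ a :: b :: R)) = ∑ k ∈ Finset.range (a / 2 + 1),
      ch ((b : ℤ) - k - 1) ((a : ℤ) - 2 * k) • mkA (QI (P ++ (a + b - k) :: k :: R)) := by
  have split : ∀ x y, mkA (QI (P ++ x :: y :: R)) = mkA (QI P) * mkA (Q x * Q y) * mkA (QI R) := by
    intro x y
    simp [QI, mul_assoc]
  simp only [split, mkA_Q_mul_Q ha hab, Finset.mul_sum, Finset.sum_mul, mul_smul_comm,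
    smul_mul_assoc]

/-- `moment [s₀, s₁, …, sₙ] = Σ i * sᵢ`. -/
def moment : List ℕ → ℕ
  | [] => 0
  | _ :: L => L.sum + moment L

lemma moment_append (A B : List ℕ) :
    moment (A ++ B) = moment A + A.length * B.sum + moment B := by
  induction A with
  | nil => simp [moment]
  | cons a A ih => simp [moment, ih]; ring

lemma moment_add_length_append_lt_append_zero_cons (P R : List ℕ) :
    moment (P ++ R) + (P ++ R).length < moment (P ++ 0 :: R) + (P ++ 0 :: R).length := by
  simp only [moment_append, moment, List.length_append, List.sum_cons, List.length_cons, zero_add]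
  omega

lemma moment_append_cons_cons_lt (P R : List ℕ) {a b k : ℕ} (hk : k < b) :
    moment (P ++ (a + b - k) :: k :: R) < moment (P ++ a :: b :: R) := by
  have hsum : a + b - k + (k + R.sum) = a + (b + R.sum) := by omega
  simp only [moment_append, moment, List.sum_cons, hsum, add_lt_add_iff_left]
  omega

lemma seqLT_trans {I J K : List ℕ} (hIJ : seqLT I J) (hJK : seqLT J K) : seqLT I K := by
  rcases hIJ with hIJ | ⟨hlen₁, t₁, ht₁, heq₁, hlt₁⟩ <;>
    rcases hJK with hJK | ⟨hlen₂, t₂, ht₂, heq₂, hlt₂⟩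
  · exact Or.inl (hIJ.trans hJK)
  · exact Or.inl (hlen₂ ▸ hIJ)
  · exact Or.inl (hlen₁ ▸ hJK)
  · refine Or.inr ⟨hlen₁.trans hlen₂, ?_⟩
    rcases lt_trichotomy t₁ t₂ with h | rfl | h
    · exact ⟨t₁, ht₁, fun s hs => (heq₁ s hs).trans (heq₂ s (hs.trans h)),
        hlt₁.trans_eq (heq₂ t₁ h)⟩
    · exact ⟨t₁, ht₁, fun s hs => (heq₁ s hs).trans (heq₂ s hs), hlt₁.trans hlt₂⟩
    · exact ⟨t₂, by omega, fun s hs => (heq₁ s (hs.trans h)).trans (heq₂ s hs),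
        (heq₁ t₂ h) ▸ hlt₂⟩

lemma seqLT_of_getD_reverse {I J : List ℕ} (hlen : I.length = J.length) {t : ℕ}
    (ht : t < I.length) (heq : ∀ s < t, I.reverse.getD s 0 = J.reverse.getD s 0)
    (hlt : I.reverse.getD t 0 < J.reverse.getD t 0) : seqLT I J := by
  have hsum : ∀ r ≤ t, ∑ s ∈ Finset.range r, (I.reverse.getD s 0 : ℤ) =
      ∑ s ∈ Finset.range r, (J.reverse.getD s 0 : ℤ) := fun r hr =>
    Finset.sum_congr rfl fun s hs => by rw [heq s ((Finset.mem_range.mp hs).trans_le hr)]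
  refine Or.inr ⟨hlen, t, ht, fun s hs => ?_, ?_⟩
  · rw [truncExcess, truncExcess, heq s hs, hsum s hs.le]
  · rw [truncExcess, truncExcess, hsum t le_rfl]
    exact sub_lt_sub_right (by exact_mod_cast hlt) _

lemma seqLT_append_cons_cons (P R : List ℕ) (x y x' y' : ℕ) (h : y' < y) :
    seqLT (P ++ x' :: y' :: R) (P ++ x :: y :: R) := by
  have hrev : ∀ x y, (P ++ x :: y :: R).reverse = R.reverse ++ y :: x :: P.reverse := by simp
  refine seqLT_of_getD_reverse (by simp) (t := R.length) (by simp only [List.length_append, List.length_cons]; omega) (fun s hs => ?_) ?_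
  · rw [hrev, hrev, List.getD_append _ _ _ _ (by simpa using hs),
      List.getD_append _ _ _ _ (by simpa using hs)]
  · rw [hrev, hrev, List.getD_append_right _ _ _ _ (by simp),
      List.getD_append_right _ _ _ _ (by simp)]
    simpa using h

def admissibleAtMost (S : List ℕ) : Set (List ℕ) :=
  {J | StAdmissible J ∧ (∀ x ∈ J, 1 ≤ x) ∧ Relation.ReflGen seqLT J S}

def admissibleSpan (S : List ℕ) : Submodule (ZMod 2) A2 :=
  Submodule.span (ZMod 2) ((fun J => mkA (QI J)) '' admissibleAtMost S)

lemma admissibleSpan_mono {S T : List ℕ} (h : seqLT T S) : admissibleSpan T ≤ admissibleSpan S := by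
  refine Submodule.span_mono (Set.image_mono fun J ⟨hJ, hpos, hle⟩ => ⟨hJ, hpos, .single ?_⟩)
  cases hle with
  | refl => exact h
  | single hJT => exact seqLT_trans hJT h

lemma mkA_QI_mem_admissibleSpan (S : List ℕ) : mkA (QI S) ∈ admissibleSpan S := by
  by_cases h0 : 0 ∈ S
  · obtain ⟨P, R, hS⟩ := List.append_of_mem h0
    rw [hS, mkA_QI_append_zero_cons]
    exact admissibleSpan_mono (Or.inl (by simp)) (mkA_QI_mem_admissibleSpan (P ++ R))
  by_cases hadm : StAdmissible S
  · refine Submodule.subset_span ⟨S, ⟨hadm, fun x hx => ?_, .refl⟩, rfl⟩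
    exact Nat.one_le_iff_ne_zero.2 (by rintro rfl; exact h0 hx)
  obtain ⟨P, a, b, R, hS, hab⟩ := exists_eq_append_cons_cons_of_not_stAdmissible hadm
  have ha : 0 < a := Nat.pos_of_ne_zero (by rintro rfl; simp [hS] at h0)
  rw [hS, mkA_QI_append_cons_cons P R ha hab]
  refine Submodule.sum_mem _ fun k hk => Submodule.smul_mem _ _ ?_
  have hkb : k < b := by simp only [Finset.mem_range] at hk; omega
  exact admissibleSpan_mono (seqLT_append_cons_cons P R _ _ _ _ hkb)
    (mkA_QI_mem_admissibleSpan (P ++ (a + b - k) :: k :: R))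
termination_by moment S + S.length
decreasing_by
  · exact hS ▸ moment_add_length_append_lt_append_zero_cons P R
  · simpa [hS] using moment_append_cons_cons_lt P R (a := a) hkb

theorem adem_rewriting_smaller_general (S : List ℕ)
    (hna : ¬ StAdmissible S) :
    ∃ c : Finset (List ℕ),
      (∀ J ∈ c, StAdmissible J ∧ (∀ x ∈ J, 1 ≤ x) ∧ seqLT J S) ∧
      mkA (QI S) = ∑ J ∈ c, mkA (QI J) := by
  obtain ⟨c, hc, heq⟩ :=
    exists_finset_sum_eq_of_mem_span_image_zmod_two (mkA_QI_mem_admissibleSpan S)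
  refine ⟨c, fun J hJ => ?_, heq⟩
  obtain ⟨hJ, hpos, hle⟩ := hc hJ
  cases hle with
  | refl => exact absurd hJ hna
  | single hlt => exact ⟨hJ, hpos, hlt⟩

/-- If `Q^S` is a non-admissible monomial, then its expression `Q^S = Σ a_J Q^J` in
admissible monomials obtained from the Adem relations involves only admissible `J < S`
in the excess order. -/
theorem adem_rewriting_smaller (S : List ℕ) (hpos : ∀ s ∈ S, 1 ≤ s)
    (hna : ¬ StAdmissible S) :
    ∃ c : Finset (List ℕ),
      (∀ J ∈ c, StAdmissible J ∧ (∀ x ∈ J, 1 ≤ x) ∧ seqLT J S) ∧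
      mkA (QI S) = ∑ J ∈ c, mkA (QI J) :=
  adem_rewriting_smaller_general S hna

end
end

section
/- The map φ_k : R[k] → R[k+1] on the length components of the mod 2 Dyer-Lashof algebra, given by φ_k(Q^I) = Q^I Q^0 (followed by rewriting into admissible form via Adem relations), satisfies: (i) if I is admissible with nonnegative excess and I ∉ 2ℕ^k (i.e. in the Madsen decomposition I = Σ a_i I_{k,i} some a_i is odd), then φ_k(Q^I) = 0; (ii) if I = Σ_{i=0}^{k−1} 2a_i I_{k,i}, then φ_k(Q^I) = Q^J where J = Σ_{i=0}^{k−1} a_i I_{k+1,i+1}. -/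
noncomputable section

/-- The relations presenting the mod 2 Dyer-Lashof algebra: the homology Adem relations
`Q^r Q^s = Σ_{t>0} C(t−s−1, 2t−r) Q^{r+s−t} Q^t` for `r > 2s`, and the vanishing of
monomials of negative excess. -/
inductive dlRel : F → F → Prop
  | adem (r s : ℕ) (h : 2 * s < r) :
      dlRel (Q r * Q s)
        (∑ t ∈ Finset.Icc 1 (r + s),
          ch ((t : ℤ) - s - 1) (2 * t - r) • (Q (r + s - t) * Q t))
  | excess (L : List ℕ) (h : ((L.headD 0 : ℤ)) < ((L.tail.sum : ℕ) : ℤ)) :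
      dlRel (QI L) 0

/-- The mod 2 Dyer-Lashof algebra `ℛ`. -/
abbrev R : Type := RingQuot dlRel

def mkR : F →ₐ[ZMod 2] R := RingQuot.mkAlgHom (ZMod 2) dlRel

/-- Madsen's sequences `I_{k,t}` (index `i` = `(i+1)`-st entry from the right). -/
def Ikt (k t : ℕ) : ℕ → ℕ := fun i =>
  if i < k then (if k ≤ i + t then 2 ^ i - 2 ^ (i + t - k) else 2 ^ i) else 0

/-- The monomial `Q^I` for a sequence given as a function `ℕ → ℕ` supported on
`{0,...,k−1}` (leftmost factor is the top entry, index `k−1`). -/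
def QF (k : ℕ) (f : ℕ → ℕ) : F := (((List.range k).reverse).map fun i => Q (f i)).prod

lemma QI_cons (a : ℕ) (L : List ℕ) : QI (a :: L) = Q a * QI L := by simp [QI]

lemma QF_succ (k : ℕ) (f : ℕ → ℕ) : QF (k+1) f = Q (f k) * QF k f := by
  simp [QF, List.range_succ]

lemma QF_eq_QI (k : ℕ) (f : ℕ → ℕ) : QF k f = QI (((List.range k).reverse).map f) := by
  simp [QF, QI, List.map_map]
  rfl

lemma QF_congr {k : ℕ} {f f' : ℕ → ℕ} (h : ∀ i < k, f i = f' i) : QF k f = QF k f' := by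
  unfold QF
  congr 1
  apply List.map_congr_left
  intro i hi
  rw [h i (by simpa using hi)]

lemma sum_list_range (k : ℕ) (f : ℕ → ℕ) :
    (((List.range k).reverse).map f).sum = ∑ i ∈ Finset.range k, f i := by
  induction k with
  | zero => simp
  | succ n ih => simp [List.range_succ, Finset.sum_range_succ, ← ih]; omega

lemma ch_of_neg {m n : ℤ} (h : n < 0) : ch m n = 0 := by
  unfold ch
  rw [if_neg]
  omega

lemma ch_zero_right {m : ℤ} (h : 0 ≤ m) : ch m 0 = 1 := by
  unfold ch
  rw [if_pos ⟨h, le_refl 0⟩]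
  simp

lemma adem_mkR (r σ : ℕ) (h : 2*σ < r) (L : List ℕ) :
    mkR (Q r * (Q σ * QI L)) =
      ∑ t ∈ Finset.Icc 1 (r + σ),
        ch ((t:ℤ) - σ - 1) (2*(t:ℤ) - (r:ℤ)) • mkR (Q (r + σ - t) * (Q t * QI L)) := by
  have hadem : mkR (Q r * Q σ) = mkR (∑ t ∈ Finset.Icc 1 (r + σ),
      ch ((t : ℤ) - σ - 1) (2 * t - r) • (Q (r + σ - t) * Q t)) :=
    RingQuot.mkAlgHom_rel (ZMod 2) (dlRel.adem r σ h)
  calc mkR (Q r * (Q σ * QI L)) = mkR (Q r * Q σ) * mkR (QI L) := by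
        rw [← map_mul, mul_assoc]
    _ = _ := by
        rw [hadem, map_sum, Finset.sum_mul]
        refine Finset.sum_congr rfl fun t _ => ?_
        rw [map_smul, smul_mul_assoc, ← map_mul, mul_assoc]

lemma excess_zero (b t : ℕ) (L : List ℕ) (h : b < t + L.sum) :
    mkR (Q b * (Q t * QI L)) = 0 := by
  have h2 : mkR (QI (b :: t :: L)) = mkR 0 :=
    RingQuot.mkAlgHom_rel (ZMod 2) (dlRel.excess (b :: t :: L)
      (by simp only [List.headD_cons, List.tail_cons, List.sum_cons]; exact_mod_cast h))
  simpa [QI_cons, map_zero] using h2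

lemma key_even (r σ : ℕ) (L : List ℕ) (hL : L.sum = σ) (hσ : 2*σ ≤ r) (h2 : 2 ∣ r) :
    mkR (Q r * (Q σ * QI L)) = mkR (Q (r/2 + σ) * (Q (r/2) * QI L)) := by
  obtain ⟨u, rfl⟩ := h2
  have hu : (2*u)/2 = u := by omega
  rw [hu]
  rcases eq_or_lt_of_le hσ with heq | hlt
  · have : σ = u := by omega
    subst this
    rw [show σ + σ = 2 * σ from by ring]
  · rw [adem_mkR _ _ hlt]
    rw [Finset.sum_eq_single_of_mem u (Finset.mem_Icc.mpr ⟨by omega, by omega⟩)]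
    · have hc : ch ((u:ℤ) - σ - 1) (2*(u:ℤ) - ((2*u : ℕ):ℤ)) = 1 := by
        have : (2*(u:ℤ) - ((2*u : ℕ):ℤ)) = 0 := by push_cast; ring
        rw [this, ch_zero_right (by omega)]
      rw [hc, one_smul, show 2*u + σ - u = u + σ from by omega]
    · intro t ht hne
      rcases lt_or_gt_of_ne (fun h : t = u => hne h) with hlt2 | hgt
      · rw [ch_of_neg (by omega), zero_smul]
      · rw [excess_zero _ _ _ (by rw [hL]; omega), smul_zero]

lemma key_odd (r σ : ℕ) (L : List ℕ) (hL : L.sum = σ) (hσ : 2*σ ≤ r) (h2 : ¬ 2 ∣ r) :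
    mkR (Q r * (Q σ * QI L)) = 0 := by
  have hlt : 2*σ < r := hσ.lt_of_ne (fun h => h2 ⟨σ, h.symm⟩)
  rw [adem_mkR _ _ hlt]
  refine Finset.sum_eq_zero fun t ht => ?_
  rcases lt_trichotomy (2*t) r with hlt2 | heq | hgt
  · rw [ch_of_neg (by omega), zero_smul]
  · exact absurd ⟨t, heq.symm⟩ h2
  · rw [excess_zero _ _ _ (by rw [hL]; simp only [Finset.mem_Icc] at ht; omega), smul_zero]

lemma mainL (k : ℕ) (hk : 1 ≤ k) (g : ℕ → ℕ)
    (hg : ∀ m < k, ∑ i ∈ Finset.range m, g i ≤ g m) :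
    mkR (QF k (fun i => 2 * g i) * Q 0) =
      mkR (QF (k+1) (fun i => if i < k then g i else ∑ j ∈ Finset.range k, g j)) := by
  induction k with
  | zero => omega
  | succ n ih =>
    rcases Nat.eq_zero_or_pos n with rfl | hn
    · have e1 : QF (0+1) (fun i => 2 * g i) * Q 0 = Q (2 * g 0) * (Q 0 * QI []) := by
        simp [QF, QI, List.range_succ]
      rw [e1, key_even _ _ _ (by simp) (by omega) ⟨g 0, rfl⟩]
      have h2 : (2 * g 0) / 2 = g 0 := by omega
      rw [h2]
      have e2 : QF (0+1+1) (fun i => if i < 0+1 then g i else ∑ j ∈ Finset.range (0+1), g j)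
          = Q (g 0 + 0) * (Q (g 0) * QI []) := by
        simp [QF, QI, List.range_succ]
      rw [e2]
    · have ih' := ih hn (fun m hm => hg m (by omega))
      have e3 : List.map (fun i => if i < n then g i else ∑ j ∈ Finset.range n, g j)
            (List.range n).reverse = List.map g (List.range n).reverse := by
        apply List.map_congr_left
        intro i hi
        simp only [List.mem_reverse, List.mem_range] at hi
        exact if_pos hi
      have e4 : List.map (fun i => if i < n+1 then g i else ∑ j ∈ Finset.range (n+1), g j)
            (List.range n).reverse = List.map g (List.range n).reverse := by
        apply List.map_congr_left
        intro i hi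
        simp only [List.mem_reverse, List.mem_range] at hi
        exact if_pos (by omega)
      have hQFn : QF (n+1) (fun i => if i < n then g i else ∑ j ∈ Finset.range n, g j)
          = Q (∑ j ∈ Finset.range n, g j) * QI ((List.range n).reverse.map g) := by
        rw [QF_eq_QI, show (List.range (n+1)).reverse = n :: (List.range n).reverse
              from by simp [List.range_succ]]
        simp only [List.map_cons, QI_cons]
        rw [if_neg (by omega), e3]
      have hsum : ((List.range n).reverse.map g).sum = ∑ j ∈ Finset.range n, g j :=
        sum_list_range n g
      have htarget : QF (n+1+1) (fun i => if i < n+1 then g i else ∑ j ∈ Finset.range (n+1), g j)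
          = Q (g n + ∑ j ∈ Finset.range n, g j)
              * (Q (g n) * QI ((List.range n).reverse.map g)) := by
        rw [QF_eq_QI, show (List.range (n+1+1)).reverse = (n+1) :: n :: (List.range n).reverse
              from by simp [List.range_succ]]
        simp only [List.map_cons, QI_cons]
        rw [if_neg (by omega), if_pos (by omega), e4, Finset.sum_range_succ,
          Nat.add_comm (∑ j ∈ Finset.range n, g j) (g n)]
      calc mkR (QF (n+1) (fun i => 2 * g i) * Q 0)
          = mkR (Q (2 * g n)) * mkR (QF n (fun i => 2 * g i) * Q 0) := by
            rw [QF_succ, mul_assoc, map_mul]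
        _ = mkR (Q (2 * g n)
              * (Q (∑ j ∈ Finset.range n, g j) * QI ((List.range n).reverse.map g))) := by
            rw [ih', hQFn, ← map_mul]
        _ = mkR (Q ((2 * g n)/2 + ∑ j ∈ Finset.range n, g j)
              * (Q ((2 * g n)/2) * QI ((List.range n).reverse.map g))) :=
            key_even _ _ _ hsum (by have := hg n (by omega); omega) ⟨g n, rfl⟩
        _ = _ := by
            rw [htarget, show (2 * g n)/2 = g n from by omega]

lemma QF_ite (n : ℕ) (g : ℕ → ℕ) :
    QF (n+1) (fun i => if i < n then g i else ∑ j ∈ Finset.range n, g j)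
      = Q (∑ j ∈ Finset.range n, g j) * QI ((List.range n).reverse.map g) := by
  have e3 : List.map (fun i => if i < n then g i else ∑ j ∈ Finset.range n, g j)
        (List.range n).reverse = List.map g (List.range n).reverse := by
    apply List.map_congr_left
    intro i hi
    simp only [List.mem_reverse, List.mem_range] at hi
    exact if_pos hi
  rw [QF_eq_QI, show (List.range (n+1)).reverse = n :: (List.range n).reverse
        from by simp [List.range_succ]]
  simp only [List.map_cons, QI_cons]
  rw [if_neg (by omega), e3]

lemma mainZ (k : ℕ) (f : ℕ → ℕ)
    (hf : ∀ m < k, ∑ i ∈ Finset.range m, f i ≤ f m)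
    (hodd : ∃ m < k, ¬ 2 ∣ f m) :
    mkR (QF k f * Q 0) = 0 := by
  induction k with
  | zero => obtain ⟨m, hm, _⟩ := hodd; omega
  | succ n ih =>
    by_cases hex : ∃ m < n, ¬ 2 ∣ f m
    · have h0 := ih (fun m hm => hf m (by omega)) hex
      rw [QF_succ, mul_assoc, map_mul, h0, mul_zero]
    · push_neg at hex
      have hall : ∀ m < n, 2 ∣ f m := by
        intro m hm
        by_contra h
        exact h (by_contra fun h' => h' (by exact absurd h (not_not.mpr (hex m hm))))
      obtain ⟨m, hm, hmo0⟩ := hodd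
      have hmn : m = n := by
        by_contra h
        exact hmo0 (hall m (by omega))
      have hmo : ¬ 2 ∣ f n := hmn ▸ hmo0
      rcases Nat.eq_zero_or_pos n with rfl | hn
      · have e1 : QF (0+1) f * Q 0 = Q (f 0) * (Q 0 * QI []) := by
          simp [QF, QI, List.range_succ]
        rw [e1, key_odd _ _ _ (by simp) (by omega) hmo]
      · set g : ℕ → ℕ := fun i => f i / 2 with hgdef
        have hfe : ∀ i < n, f i = 2 * g i := fun i hi => (Nat.mul_div_cancel' (hall i hi)).symm
        have hsum2 : ∀ m ≤ n, ∑ i ∈ Finset.range m, f i = 2 * ∑ i ∈ Finset.range m, g i := by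
          intro m hm'
          rw [Finset.mul_sum]
          exact Finset.sum_congr rfl fun i hi =>
            hfe i (by simp only [Finset.mem_range] at hi; omega)
        have hg : ∀ m < n, ∑ i ∈ Finset.range m, g i ≤ g m := by
          intro m hm'
          have h2 := hf m (by omega)
          rw [hsum2 m (by omega), hfe m hm'] at h2
          omega
        have hQFf : QF n f = QF n (fun i => 2 * g i) := QF_congr fun i hi => hfe i hi
        have hL := mainL n hn g hg
        have hsum : ((List.range n).reverse.map g).sum = ∑ j ∈ Finset.range n, g j :=
          sum_list_range n g
        calc mkR (QF (n+1) f * Q 0)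
            = mkR (Q (f n)) * mkR (QF n (fun i => 2 * g i) * Q 0) := by
              rw [QF_succ, mul_assoc, map_mul, hQFf]
          _ = mkR (Q (f n)
                * (Q (∑ j ∈ Finset.range n, g j) * QI ((List.range n).reverse.map g))) := by
              rw [hL, QF_ite, ← map_mul]
          _ = 0 := by
              apply key_odd _ _ _ hsum _ hmo
              have h2 := hf n (by omega)
              rw [hsum2 n le_rfl] at h2
              omega

lemma Ikt_eq_val (k t m : ℕ) (hm : m < k) :
    Ikt k t m = if k ≤ m + t then 2^m - 2^(m+t-k) else 2^m := by
  simp [Ikt, hm]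

lemma IktSum (k t : ℕ) (ht : t < k) :
    ∀ m, m ≤ k → (∑ i ∈ Finset.range m, Ikt k t i) + (if m + t < k then 1 else 0)
      = (if k ≤ m + t then 2^m - 2^(m+t-k) else 2^m) := by
  intro m
  induction m with
  | zero =>
    intro _
    simp [ht, Nat.not_le.mpr ht]
  | succ m ihm =>
    intro hm1
    have hmk : m < k := by omega
    have ihm' := ihm (by omega)
    rw [Finset.sum_range_succ, Ikt_eq_val k t m hmk]
    have p1 : 2^(m+1) = 2 * 2^m := by rw [pow_succ]; ring
    have p2 : 1 ≤ 2^m := Nat.one_le_two_pow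
    rcases Nat.lt_or_ge (m+t) k with hc | hc
    · rw [if_pos hc, if_neg (by omega)] at ihm'
      rw [if_neg (by omega : ¬ k ≤ m + t)]
      rcases Nat.lt_or_ge (m+1+t) k with hd | hd
      · rw [if_pos hd, if_neg (by omega)]
        omega
      · have he : m+1+t = k := by omega
        rw [if_neg (by omega), if_pos hd, show m+1+t-k = 0 from by omega, pow_zero]
        omega
    · rw [if_neg (by omega), if_pos hc] at ihm'
      have r1 : 2^(m+1+t-k) = 2 * 2^(m+t-k) := by
        rw [show m+1+t-k = (m+t-k)+1 from by omega, pow_succ]; ring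
      have r2 : 2^(m+t-k) ≤ 2^m := Nat.pow_le_pow_right (by norm_num) (by omega)
      rw [if_pos hc, if_neg (by omega), if_pos (by omega : k ≤ m+1+t), r1]
      omega

lemma excess_f (k m : ℕ) (hm : m < k) (a : ℕ → ℕ) :
    ∑ i ∈ Finset.range m, (∑ t ∈ Finset.range k, a t * Ikt k t i)
      ≤ ∑ t ∈ Finset.range k, a t * Ikt k t m := by
  rw [Finset.sum_comm]
  apply Finset.sum_le_sum
  intro t htmem
  rw [← Finset.mul_sum]
  apply Nat.mul_le_mul_left
  have ht : t < k := Finset.mem_range.mp htmem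
  have h1 := IktSum k t ht m (by omega)
  rw [← Ikt_eq_val k t m hm] at h1
  omega

lemma top_f (k t : ℕ) (ht : t < k) :
    ∑ i ∈ Finset.range k, Ikt k t i = 2^k - 2^t := by
  have h1 := IktSum k t ht k le_rfl
  rw [if_neg (by omega), if_pos (by omega), show k + t - k = t from by omega] at h1
  omega

lemma Ikt_mod (k t m : ℕ) (h1 : 1 ≤ m) (hm : m < k) :
    Ikt k t m % 2 = if m + t = k then 1 else 0 := by
  rw [Ikt_eq_val k t m hm]
  have h2m : 2 ∣ 2^m := dvd_pow_self 2 (by omega : m ≠ 0)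
  have h2m2 : 2 ≤ 2^m := by
    calc 2 = 2^1 := (pow_one 2).symm
    _ ≤ 2^m := Nat.pow_le_pow_right (by norm_num) h1
  rcases Nat.lt_or_ge (m+t) k with hc | hc
  · rw [if_neg (by omega), if_neg (by omega)]
    omega
  · rcases eq_or_lt_of_le hc with he | hlt
    · rw [if_pos (by omega), if_pos (by omega), show m+t-k = 0 from by omega, pow_zero]
      omega
    · have h2d : 2 ∣ 2^(m+t-k) := dvd_pow_self 2 (by omega : m+t-k ≠ 0)
      rw [if_pos (by omega), if_neg (by omega)]
      omega

lemma Ikt_zero (k t : ℕ) (ht : t < k) : Ikt k t 0 = 1 := by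
  unfold Ikt
  rw [if_pos (show 0 < k by omega), if_neg (show ¬ k ≤ 0 + t by omega), pow_zero]

lemma Ikt_shift (k t i : ℕ) (hi : i < k) : Ikt (k+1) (t+1) i = Ikt k t i := by
  unfold Ikt
  rw [if_pos hi, if_pos (by omega : i < k+1)]
  by_cases hc : k ≤ i + t
  · rw [if_pos (by omega : k+1 ≤ i+(t+1)), if_pos hc,
      show i+(t+1)-(k+1) = i+t-k from by omega]
  · rw [if_neg (by omega : ¬ k+1 ≤ i+(t+1)), if_neg hc]

lemma Ikt_top (k t : ℕ) : Ikt (k+1) (t+1) k = 2^k - 2^t := by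
  unfold Ikt
  rw [if_pos (by omega), if_pos (by omega), show k+(t+1)-(k+1) = t from by omega]

lemma a_even (k : ℕ) (hk : 1 ≤ k) (a : ℕ → ℕ)
    (h : ∀ m < k, 2 ∣ ∑ t ∈ Finset.range k, a t * Ikt k t m) :
    ∀ i < k, 2 ∣ a i := by
  have claim1 : ∀ i, 1 ≤ i → i < k → 2 ∣ a i := by
    intro i h1 hik
    have hmlt : k - i < k := by omega
    have hm1 : 1 ≤ k - i := by omega
    have hsum := h (k - i) hmlt
    rw [← Finset.add_sum_erase (Finset.range k) _ (Finset.mem_range.mpr hik)] at hsum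
    have heven : 2 ∣ ∑ t ∈ (Finset.range k).erase i, a t * Ikt k t (k-i) := by
      apply Finset.dvd_sum
      intro t htmem
      have ht2 : t ≠ i := (Finset.mem_erase.mp htmem).1
      have hIk : Ikt k t (k-i) % 2 = 0 := by
        rw [Ikt_mod k t (k-i) hm1 hmlt, if_neg (by omega)]
      exact Dvd.dvd.mul_left (by omega : 2 ∣ Ikt k t (k-i)) (a t)
    have hodd : Ikt k i (k-i) % 2 = 1 := by
      rw [Ikt_mod k i (k-i) hm1 hmlt, if_pos (by omega)]
    have h2 : 2 ∣ a i * Ikt k i (k-i) := (Nat.dvd_add_right heven).mp (by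
      rwa [Nat.add_comm] at hsum)
    rcases (Nat.Prime.dvd_mul Nat.prime_two).mp h2 with h' | h'
    · exact h'
    · omega
  intro i hik
  rcases Nat.eq_zero_or_pos i with rfl | hi1
  · have hsum := h 0 (by omega)
    have e0 : ∑ t ∈ Finset.range k, a t * Ikt k t 0 = ∑ t ∈ Finset.range k, a t := by
      apply Finset.sum_congr rfl
      intro t htmem
      rw [Ikt_zero k t (Finset.mem_range.mp htmem), Nat.mul_one]
    rw [e0, ← Finset.add_sum_erase (Finset.range k) _ (Finset.mem_range.mpr hk)] at hsum
    have heven : 2 ∣ ∑ t ∈ (Finset.range k).erase 0, a t := by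
      apply Finset.dvd_sum
      intro t htmem
      have := Finset.mem_erase.mp htmem
      exact claim1 t (by omega) (by simpa using this.2)
    exact (Nat.dvd_add_right heven).mp (by rwa [Nat.add_comm] at hsum)
  · exact claim1 i hi1 hik

/-- The map `φ_k : R[k] → R[k+1]`, `Q^I ↦ Q^I Q^0` : (i) if in the Madsen decomposition
`I = Σ a_i I_{k,i}` some `a_i` is odd, then `φ_k(Q^I) = 0`; (ii) if
`I = Σ 2 a_i I_{k,i}`, then `φ_k(Q^I) = Q^J` with `J = Σ a_i I_{k+1,i+1}`. -/
theorem phi_k_formula (k : ℕ) (hk : 1 ≤ k) (a : ℕ → ℕ) :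
    ((∃ i < k, ¬ 2 ∣ a i) →
      mkR (QF k (fun i => ∑ t ∈ Finset.range k, a t * Ikt k t i) * Q 0) = 0) ∧
    (mkR (QF k (fun i => ∑ t ∈ Finset.range k, 2 * a t * Ikt k t i) * Q 0) =
      mkR (QF (k + 1) fun i => ∑ t ∈ Finset.range k, a t * Ikt (k + 1) (t + 1) i)) := by
  constructor
  · rintro ⟨i, hik, hai⟩
    apply mainZ k _ (fun m hm => excess_f k m hm a)
    by_contra hno
    push_neg at hno
    exact hai (a_even k hk a hno i hik)
  · have hgfun : (fun i => ∑ t ∈ Finset.range k, 2 * a t * Ikt k t i)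
        = fun i => 2 * (∑ t ∈ Finset.range k, a t * Ikt k t i) := by
      funext i
      rw [Finset.mul_sum]
      exact Finset.sum_congr rfl fun t _ => by ring
    rw [hgfun, mainL k hk _ (fun m hm => excess_f k m hm a)]
    congr 1
    apply QF_congr
    intro i hik1
    by_cases hik : i < k
    · rw [if_pos hik]
      exact Finset.sum_congr rfl fun t htmem => by rw [Ikt_shift k t i hik]
    · have hike : i = k := by omega
      rw [hike, if_neg (by omega), Finset.sum_comm]
      apply Finset.sum_congr rfl
      intro t htmem
      rw [← Finset.mul_sum, top_f k t (Finset.mem_range.mp htmem), Ikt_top]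

end
end
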